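/- Under the constraints k in the Fermi ball, k+p outside, and e(k)+e(k+p) ≤ A|p|²ε², with |k| of order N^{1/3} (precisely ‖k‖ ≥ c ε^{-1} for some c > 0 with ε²μ-normalization), the angle θ between k and p satisfies |cos θ| ≤ C·A·|p|·ε for a constant C depending only on c and μ. -/

import Mathlib

/-!
Since `k` lies inside the Fermi ball and `k + p` outside, the two excitation energies add up to
`ε² (‖k + p‖² - ‖k‖²) = ε² (2⟪k, p⟫ + ‖p‖²)`. The energy bound therefore caps `2⟪k, p⟫` from
above by `A ‖p‖²`, while `‖k‖ ≤ ‖k + p‖` caps it from below by `-‖p‖² ≥ -A ‖p‖²`. Dividing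
`|⟪k, p⟫| ≤ A ‖p‖² / 2` by `‖k‖ ‖p‖ ≥ (c / ε) ‖p‖` gives `|cos θ| ≤ A ‖p‖ ε / (2c)`.
-/

open RealInnerProductSpace

theorem abs_sub_add_abs_sub_eq_sub {a b μ : ℝ} (ha : a ≤ μ) (hb : μ ≤ b) :
    |b - μ| + |a - μ| = b - a := by
  rw [abs_of_nonneg (sub_nonneg.mpr hb), abs_of_nonpos (sub_nonpos.mpr ha)]
  ring

section InnerProductSpace

variable {E : Type*} [NormedAddCommGroup E] [InnerProductSpace ℝ E]

theorem two_mul_abs_inner_le_of_norm_add_sq_sub_le {k p : E} {A : ℝ} (hA : 1 ≤ A)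
    (hkp : ‖k‖ ^ 2 ≤ ‖k + p‖ ^ 2) (h : ‖k + p‖ ^ 2 - ‖k‖ ^ 2 ≤ A * ‖p‖ ^ 2) :
    2 * |⟪k, p⟫| ≤ A * ‖p‖ ^ 2 := by
  have hsq := norm_add_sq_real k p
  have hp : ‖p‖ ^ 2 ≤ A * ‖p‖ ^ 2 := le_mul_of_one_le_left (by positivity) hA
  rw [← abs_two, ← abs_mul, abs_le]
  constructor <;> linarith [sq_nonneg ‖p‖]

theorem abs_inner_div_norm_mul_norm_le {k p : E} {A d : ℝ}
    (h : 2 * |⟪k, p⟫| ≤ A * ‖p‖ ^ 2) (hd : 0 < d) (hdk : d ≤ ‖k‖) :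
    |⟪k, p⟫| / (‖k‖ * ‖p‖) ≤ A * ‖p‖ / (2 * d) := by
  rcases eq_or_ne p 0 with rfl | hp
  · simp
  have hp : 0 < ‖p‖ := norm_pos_iff.mpr hp
  calc |⟪k, p⟫| / (‖k‖ * ‖p‖) ≤ (A * ‖p‖ ^ 2 / 2) / (d * ‖p‖) :=
        div_le_div₀ (by linarith [abs_nonneg ⟪k, p⟫]) (by linarith) (by positivity)
          (mul_le_mul_of_nonneg_right hdk hp.le)
    _ = A * ‖p‖ / (2 * d) := by field_simp

end InnerProductSpace

theorem stmt_10_general (c μ : ℝ) (hc : 0 < c) :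
    ∃ C : ℝ, 0 < C ∧ ∀ (A ε : ℝ) (k p : EuclideanSpace ℝ (Fin 3)),
      1 ≤ A → 0 < ε → ε ≤ 1 → k ≠ 0 → p ≠ 0 →
      c / ε ≤ ‖k‖ →
      ε ^ 2 * ‖k‖ ^ 2 ≤ μ → μ < ε ^ 2 * ‖k + p‖ ^ 2 →
      |ε ^ 2 * ‖k + p‖ ^ 2 - μ| + |ε ^ 2 * ‖k‖ ^ 2 - μ| ≤ A * ‖p‖ ^ 2 * ε ^ 2 →
      |(inner ℝ k p : ℝ)| / (‖k‖ * ‖p‖) ≤ C * A * ‖p‖ * ε := by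
  refine ⟨1 / (2 * c), by positivity, ?_⟩
  intro A ε k p hA hε _ _ _ hck hin hout hee
  rw [abs_sub_add_abs_sub_eq_sub hin hout.le] at hee
  have hε2 : 0 < ε ^ 2 := by positivity
  have hkp : ‖k‖ ^ 2 ≤ ‖k + p‖ ^ 2 := le_of_mul_le_mul_left (by linarith) hε2
  have hdiff : ‖k + p‖ ^ 2 - ‖k‖ ^ 2 ≤ A * ‖p‖ ^ 2 :=
    le_of_mul_le_mul_left (by linarith) hε2
  calc |⟪k, p⟫| / (‖k‖ * ‖p‖) ≤ A * ‖p‖ / (2 * (c / ε)) :=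
        abs_inner_div_norm_mul_norm_le
          (two_mul_abs_inner_le_of_norm_add_sq_sub_le hA hkp hdiff) (by positivity) hck
    _ = 1 / (2 * c) * A * ‖p‖ * ε := by field_simp

/-- If `k` is in the Fermi ball, `k + p` outside it, `‖k‖ ≥ c/ε`, and the excitation
energies satisfy `e(k+p) + e(k) ≤ A‖p‖²ε²` (with `A` large enough, `A ≥ 1`),
then the angle `θ` between `k` and `p` satisfies `|cos θ| ≤ C A ‖p‖ ε`,
with `C` depending only on `c` and `μ`. -/
theorem stmt_10 (c μ : ℝ) (hc : 0 < c) (hμ : 0 < μ) :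
    ∃ C : ℝ, 0 < C ∧ ∀ (A ε : ℝ) (k p : EuclideanSpace ℝ (Fin 3)),
      1 ≤ A → 0 < ε → ε ≤ 1 → k ≠ 0 → p ≠ 0 →
      c / ε ≤ ‖k‖ →
      ε ^ 2 * ‖k‖ ^ 2 ≤ μ → μ < ε ^ 2 * ‖k + p‖ ^ 2 →
      |ε ^ 2 * ‖k + p‖ ^ 2 - μ| + |ε ^ 2 * ‖k‖ ^ 2 - μ| ≤ A * ‖p‖ ^ 2 * ε ^ 2 →
      |(inner ℝ k p : ℝ)| / (‖k‖ * ‖p‖) ≤ C * A * ‖p‖ * ε :=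
  stmt_10_general c μ hc
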